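/- arXiv:cs/0407034 — 2 statements merged into one kernel-verified Lean document; each statement's English description precedes it below -/
import Mathlib

section
/- Let (P, O, I, G) be a STRIPS instance, o an operator over P, y ∉ P a fresh condition, and o' the operator obtained from o by adding y as a positive precondition. Define I' = I ∪ {y} if o ∈ O and I' = I otherwise. Then (P, O, I, G) has a plan if and only if (P ∪ {y}, O ∪ {o'}, I', G) has a plan. -/
/-- A STRIPS operator: positive/negative preconditions and positive/negative effects. -/
structure Op (C : Type*) where
  prePos : Set C
  preNeg : Set C
  add : Set C
  del : Set C

variable {C : Type*}

/-- An operator is applicable in a state `S` if its positive preconditions hold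
and its negative preconditions are false. -/
def Applicable (o : Op C) (S : Set C) : Prop :=
  o.prePos ⊆ S ∧ o.preNeg ∩ S = ∅

/-- Executing an operator in a state. -/
def execOp (o : Op C) (S : Set C) : Set C :=
  (S \ o.del) ∪ o.add

/-- `ExecSeq S π T`: the sequence `π` is executable from `S` and leads to `T`. -/
inductive ExecSeq : Set C → List (Op C) → Set C → Prop
  | nil (S : Set C) : ExecSeq S [] S
  | cons {S T : Set C} {o : Op C} {π : List (Op C)} :
      Applicable o S → ExecSeq (execOp o S) π T → ExecSeq S (o :: π) T

/-- A state is reachable from `I` using operators from `O`. -/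
def Reachable (O : Set (Op C)) (I S : Set C) : Prop :=
  ∃ π : List (Op C), (∀ o ∈ π, o ∈ O) ∧ ExecSeq I π S

/-- `π` is a plan for operators `O`, initial state `I`, and goal `(M, N)`. -/
def IsPlan (O : Set (Op C)) (I M N : Set C) (π : List (Op C)) : Prop :=
  (∀ o ∈ π, o ∈ O) ∧ ∃ S, ExecSeq I π S ∧ M ⊆ S ∧ N ∩ S = ∅

/-- The STRIPS instance `(P, O, I, (M, N))` has a plan. -/
def HasPlan (_P : Set C) (O : Set (Op C)) (I M N : Set C) : Prop :=
  ∃ π, IsPlan O I M N π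

/-- An operator mentions a condition if it occurs in any of its four components. -/
def Mentions (o : Op C) (c : C) : Prop :=
  c ∈ o.prePos ∨ c ∈ o.preNeg ∨ c ∈ o.add ∨ c ∈ o.del

section Aux
variable {C : Type*}

lemma execOp_union_y {o : Op C} {S : Set C} {y : C} (hdel : y ∉ o.del) :
    execOp o (S ∪ {y}) = execOp o S ∪ {y} := by
  unfold execOp
  ext c
  by_cases hc : c = y <;> simp [hc, hdel] <;> tauto

lemma fwd_lemma {O : Set (Op C)} {y : C} (hOP : ∀ p ∈ O, ¬ Mentions p y) :
    ∀ {π : List (Op C)} {S T : Set C}, (∀ p ∈ π, p ∈ O) → ExecSeq S π T →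
      ExecSeq (S ∪ {y}) π (T ∪ {y}) := by
  intro π
  induction π with
  | nil => intro S T _ h; cases h; exact ExecSeq.nil _
  | cons p π ih =>
    intro S T hmem h
    cases h with
    | cons happ hrest =>
      have hny := hOP p (hmem p (by simp))
      have hneg : y ∉ p.preNeg := fun h => hny (Or.inr (Or.inl h))
      have hdel : y ∉ p.del := fun h => hny (Or.inr (Or.inr (Or.inr h)))
      refine ExecSeq.cons ⟨happ.1.trans Set.subset_union_left, ?_⟩ ?_
      · rw [Set.inter_union_distrib_left, happ.2, Set.empty_union,
          Set.inter_singleton_eq_empty.mpr hneg]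
      · rw [execOp_union_y hdel]
        exact ih (fun q hq => hmem q (by simp [hq])) hrest

lemma bwd_lemma {O : Set (Op C)} {o : Op C} {y : C}
    (hOP : ∀ p ∈ O, ¬ Mentions p y) (hoy : ¬ Mentions o y) (hoO : o ∈ O) :
    ∀ {π : List (Op C)} {S T : Set C}, y ∉ S →
      (∀ p ∈ π, p ∈ O ∪ {(⟨o.prePos ∪ {y}, o.preNeg, o.add, o.del⟩ : Op C)}) →
      ExecSeq (S ∪ {y}) π T →
      ∃ π₀ T₀, (∀ p ∈ π₀, p ∈ O) ∧ ExecSeq S π₀ T₀ ∧ y ∉ T₀ ∧ T = T₀ ∪ {y} := by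
  intro π
  induction π with
  | nil =>
    intro S T hyS _ h; cases h
    exact ⟨[], S, by simp, ExecSeq.nil _, hyS, rfl⟩
  | cons p π ih =>
    intro S T hyS hmem h
    have hody : y ∉ o.del := fun h => hoy (Or.inr (Or.inr (Or.inr h)))
    have hoay : y ∉ o.add := fun h => hoy (Or.inr (Or.inr (Or.inl h)))
    cases h with
    | cons happ hrest =>
      rcases hmem p (by simp) with hpO | hpo'
      · -- p ∈ O
        have hny := hOP p hpO
        have hpre : y ∉ p.prePos := fun h => hny (Or.inl h)
        have hdel : y ∉ p.del := fun h => hny (Or.inr (Or.inr (Or.inr h)))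
        have hadd : y ∉ p.add := fun h => hny (Or.inr (Or.inr (Or.inl h)))
        have hsub : p.prePos ⊆ S := by
          intro c hc
          rcases happ.1 hc with h | h
          · exact h
          · exact absurd (h ▸ hc) hpre
        have hneg : p.preNeg ∩ S = ∅ := by
          apply Set.eq_empty_of_subset_empty
          rw [← happ.2]; exact Set.inter_subset_inter_right _ Set.subset_union_left
        have hyE : y ∉ execOp p S := by
          intro h
          rcases h with h | h
          · exact hyS h.1
          · exact hadd h
        rw [execOp_union_y hdel] at hrest
        obtain ⟨π₀, T₀, h1, h2, h3, h4⟩ := ih hyE (fun q hq => hmem q (by simp [hq])) hrest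
        exact ⟨p :: π₀, T₀, by simpa using ⟨hpO, h1⟩, ExecSeq.cons ⟨hsub, hneg⟩ h2, h3, h4⟩
      · -- p = o'
        simp only [Set.mem_singleton_iff] at hpo'
        subst hpo'
        have hopre : y ∉ o.prePos := fun h => hoy (Or.inl h)
        have hsub : o.prePos ⊆ S := by
          intro c hc
          rcases happ.1 (Or.inl hc) with h | h
          · exact h
          · exact absurd (h ▸ hc) hopre
        have hneg : o.preNeg ∩ S = ∅ := by
          apply Set.eq_empty_of_subset_empty
          rw [← happ.2]; exact Set.inter_subset_inter_right _ Set.subset_union_left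
        have hexec : execOp (⟨o.prePos ∪ {y}, o.preNeg, o.add, o.del⟩ : Op C) (S ∪ {y})
            = execOp o S ∪ {y} := by
          have h0 : execOp (⟨o.prePos ∪ {y}, o.preNeg, o.add, o.del⟩ : Op C) (S ∪ {y})
              = execOp o (S ∪ {y}) := rfl
          rw [h0, execOp_union_y hody]
        have hyE : y ∉ execOp o S := by
          intro h
          rcases h with h | h
          · exact hyS h.1
          · exact hoay h
        rw [hexec] at hrest
        obtain ⟨π₀, T₀, h1, h2, h3, h4⟩ := ih hyE (fun q hq => hmem q (by simp [hq])) hrest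
        exact ⟨o :: π₀, T₀, by simpa using ⟨hoO, h1⟩, ExecSeq.cons ⟨hsub, hneg⟩ h2, h3, h4⟩

lemma noy_lemma {O : Set (Op C)} {o : Op C} {y : C}
    (hOP : ∀ p ∈ O, ¬ Mentions p y) :
    ∀ {π : List (Op C)} {S T : Set C}, y ∉ S →
      (∀ p ∈ π, p ∈ O ∪ {(⟨o.prePos ∪ {y}, o.preNeg, o.add, o.del⟩ : Op C)}) →
      ExecSeq S π T → (∀ p ∈ π, p ∈ O) := by
  intro π
  induction π with
  | nil => intro S T _ _ _; simp
  | cons p π ih =>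
    intro S T hyS hmem h
    cases h with
    | cons happ hrest =>
      rcases hmem p (by simp) with hpO | hpo'
      · have hny := hOP p hpO
        have hadd : y ∉ p.add := fun h => hny (Or.inr (Or.inr (Or.inl h)))
        have hyE : y ∉ execOp p S := by
          intro h; rcases h with h | h
          · exact hyS h.1
          · exact hadd h
        have := ih hyE (fun q hq => hmem q (by simp [hq])) hrest
        intro q hq
        rcases List.mem_cons.mp hq with rfl | hq
        · exact hpO
        · exact this q hq
      · simp only [Set.mem_singleton_iff] at hpo'
        exact absurd (happ.1 (hpo' ▸ Or.inr rfl)) hyS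

end Aux

/-- fixing one operator. With `o'` being `o` plus the fresh positive
precondition `y`, and `y` added to the initial state exactly when `o ∈ O`,
plan existence is preserved. -/
theorem stmt6 (P : Set C) (O : Set (Op C)) (I M N : Set C) (o : Op C) (y : C)
    (hyP : y ∉ P) (hI : I ⊆ P) (hM : M ⊆ P) (hN : N ⊆ P)
    (hOP : ∀ p ∈ O, ¬ Mentions p y) (hoy : ¬ Mentions o y)
    (ho' : o ∈ O → (⟨o.prePos ∪ {y}, o.preNeg, o.add, o.del⟩ : Op C) ∉ O) :
    HasPlan P O I M N ↔
      HasPlan (P ∪ {y})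
        (O ∪ {(⟨o.prePos ∪ {y}, o.preNeg, o.add, o.del⟩ : Op C)})
        (I ∪ {c | o ∈ O ∧ c = y}) M N := by
  have hyI : y ∉ I := fun h => hyP (hI h)
  have hyM : y ∉ M := fun h => hyP (hM h)
  have hyN : y ∉ N := fun h => hyP (hN h)
  by_cases hoO : o ∈ O
  · have hI' : (I ∪ {c | o ∈ O ∧ c = y}) = I ∪ {y} := by
      ext c; simp [hoO]
    rw [hI']
    constructor
    · rintro ⟨π, hmem, S, hexec, hMS, hNS⟩
      refine ⟨π, fun p hp => Or.inl (hmem p hp), S ∪ {y},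
        fwd_lemma hOP hmem hexec, hMS.trans Set.subset_union_left, ?_⟩
      rw [Set.inter_union_distrib_left, hNS, Set.empty_union,
        Set.inter_singleton_eq_empty.mpr hyN]
    · rintro ⟨π, hmem, S, hexec, hMS, hNS⟩
      obtain ⟨π₀, T₀, h1, h2, h3, h4⟩ := bwd_lemma hOP hoy hoO hyI hmem hexec
      refine ⟨π₀, h1, T₀, h2, ?_, ?_⟩
      · intro c hc
        rcases h4 ▸ hMS hc with h | h
        · exact h
        · exact absurd (h ▸ hc) hyM
      · apply Set.eq_empty_of_subset_empty
        rw [← hNS]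
        exact Set.inter_subset_inter_right _ (h4 ▸ Set.subset_union_left)
  · have hI' : (I ∪ {c | o ∈ O ∧ c = y}) = I := by
      ext c; simp [hoO]
    rw [hI']
    constructor
    · rintro ⟨π, hmem, S, hexec, hMS, hNS⟩
      exact ⟨π, fun p hp => Or.inl (hmem p hp), S, hexec, hMS, hNS⟩
    · rintro ⟨π, hmem, S, hexec, hMS, hNS⟩
      exact ⟨π, noy_lemma hOP hyI hmem hexec, S, hexec, hMS, hNS⟩
end

section
/- Iterated fixing of operators: let P be a finite condition set and o₁,…,o_k an enumeration of a finite set of operators over P. For any STRIPS instance (P, O, I, G) with O ⊆ {o₁,…,o_k}, let y₁,…,y_k be fresh distinct conditions, let o_i' be o_i with y_i added as a positive precondition, and let I' = I ∪ { y_i : o_i ∈ O }. Then (P, O, I, G) has a plan if and only if (P ∪ {y₁,…,y_k}, {o₁',…,o_k'}, I', G) has a plan. -/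
variable {C : Type*}

/- Each fresh condition `y i` occurs in the fixed operator `o_i'` only as a positive
precondition, so no operator adds or deletes it: the set `Y` of fresh conditions true
initially stays true along every run, and all others stay false. Since the old operators
only mention `P`, a run of fixed operators from `I ∪ Y` is therefore a run of the original
operators from `I` with `Y` carried along, and `o_i'` fires exactly when `y i ∈ Y`, that is,
when `o_i ∈ O`. -/

def Op.withPrePos (o : Op C) (c : C) : Op C :=
  { o with prePos := o.prePos ∪ {c} }

@[simp]
theorem execOp_withPrePos (o : Op C) (c : C) : execOp (o.withPrePos c) = execOp o :=
  rfl

theorem ExecSeq.nil_iff {S T : Set C} : ExecSeq S [] T ↔ T = S :=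
  ⟨fun h => by cases h; rfl, fun h => h ▸ ExecSeq.nil S⟩

theorem ExecSeq.cons_iff {S T : Set C} {o : Op C} {π : List (Op C)} :
    ExecSeq S (o :: π) T ↔ Applicable o S ∧ ExecSeq (execOp o S) π T :=
  ⟨fun h => by cases h with | cons happ hrest => exact ⟨happ, hrest⟩,
    fun h => ExecSeq.cons h.1 h.2⟩

theorem hasPlan_iff_exists_indices {ι : Type*} {ops : ι → Op C} {O : Set (Op C)}
    (hO : O ⊆ Set.range ops) (P I M N : Set C) :
    HasPlan P O I M N ↔
      ∃ is : List ι, (∀ i ∈ is, ops i ∈ O) ∧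
        ∃ S, ExecSeq I (is.map ops) S ∧ M ⊆ S ∧ N ∩ S = ∅ := by
  constructor
  · rintro ⟨π, hπO, hπ⟩
    obtain ⟨is, rfl⟩ : π ∈ Set.range (List.map ops) := by
      rw [Set.range_list_map]
      exact fun o ho => hO (hπO o ho)
    exact ⟨is, fun i hi => hπO _ (List.mem_map_of_mem hi), hπ⟩
  · rintro ⟨is, hisO, hexec⟩
    exact ⟨is.map ops, by simpa using hisO, hexec⟩

section FreshConditions

variable {P Y S : Set C} {o : Op C}

theorem execOp_subset (hSP : S ⊆ P) (hadd : o.add ⊆ P) : execOp o S ⊆ P :=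
  Set.union_subset (Set.sdiff_subset.trans hSP) hadd

theorem execOp_union_of_disjoint (h : Disjoint Y o.del) :
    execOp o (S ∪ Y) = execOp o S ∪ Y := by
  rw [execOp, execOp, Set.union_sdiff_distrib, h.sdiff_eq_left, Set.union_right_comm]

theorem applicable_withPrePos_union_iff {c : C} (hSP : S ⊆ P) (hYP : Disjoint Y P)
    (hoP : ∀ c, Mentions o c → c ∈ P) (hc : c ∉ P) :
    Applicable (o.withPrePos c) (S ∪ Y) ↔ Applicable o S ∧ c ∈ Y := by
  have hpre : o.prePos ⊆ S ∪ Y ↔ o.prePos ⊆ S :=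
    ⟨fun h => (hYP.symm.mono_left fun c hc => hoP c (Or.inl hc)).subset_left_of_subset_union h,
      fun h => h.trans Set.subset_union_left⟩
  have hneg : o.preNeg ∩ Y = ∅ :=
    (hYP.symm.mono_left fun c hc => hoP c (Or.inr (Or.inl hc))).inter_eq
  have hcY : c ∈ S ∪ Y ↔ c ∈ Y := ⟨fun h => h.resolve_left (hc <| hSP ·), Or.inr⟩
  simp only [Applicable, Op.withPrePos, Set.union_subset_iff, Set.singleton_subset_iff, hpre, hcY,
    Set.inter_union_distrib_left, hneg, Set.union_empty]
  tauto

theorem execSeq_map_withPrePos_iff {ι : Type*} {ops : ι → Op C} {y : ι → C}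
    (hYP : Disjoint Y P) (hopsP : ∀ i c, Mentions (ops i) c → c ∈ P) (hyP : ∀ i, y i ∉ P)
    (is : List ι) {S T' : Set C} (hSP : S ⊆ P) :
    ExecSeq (S ∪ Y) (is.map fun i => (ops i).withPrePos (y i)) T' ↔
      ∃ T, ExecSeq S (is.map ops) T ∧ (∀ i ∈ is, y i ∈ Y) ∧ T' = T ∪ Y := by
  induction is generalizing S with
  | nil => simp [ExecSeq.nil_iff]
  | cons i is ih =>
    have hdel : Disjoint Y (ops i).del :=
      hYP.mono_right fun c hc => hopsP i c (Or.inr (Or.inr (Or.inr hc)))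
    have hS' : execOp (ops i) S ⊆ P :=
      execOp_subset hSP fun c hc => hopsP i c (Or.inr (Or.inr (Or.inl hc)))
    simp only [List.map_cons, ExecSeq.cons_iff, List.forall_mem_cons,
      applicable_withPrePos_union_iff hSP hYP (hopsP i) (hyP i), execOp_withPrePos,
      execOp_union_of_disjoint hdel, ih hS']
    constructor
    · rintro ⟨⟨happ, hyi⟩, T, hexec, his, rfl⟩
      exact ⟨T, ⟨happ, hexec⟩, ⟨hyi, his⟩, rfl⟩
    · rintro ⟨T, ⟨happ, hexec⟩, ⟨hyi, his⟩, rfl⟩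
      exact ⟨⟨happ, hyi⟩, T, hexec, his, rfl⟩

end FreshConditions

/-- iterated fixing of operators. Adding a fresh positive precondition
`y i` to each operator `ops i` of an enumeration, and putting `y i` in the initial
state exactly when `ops i ∈ O`, preserves plan existence; the resulting operator set
depends only on the enumeration, not on `O`. -/
theorem stmt16 (P : Set C) (k : ℕ) (ops : Fin k → Op C) (O : Set (Op C))
    (I M N : Set C) (y : Fin k → C)
    (hO : O ⊆ Set.range ops)
    (hyinj : Function.Injective y)
    (hyP : ∀ i, y i ∉ P)
    (hopsP : ∀ (j : Fin k) (c : C), Mentions (ops j) c → c ∈ P)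
    (hI : I ⊆ P) (hM : M ⊆ P) (hN : N ⊆ P) :
    HasPlan P O I M N ↔
      HasPlan (P ∪ Set.range y)
        (Set.range fun i : Fin k =>
          (⟨(ops i).prePos ∪ {y i}, (ops i).preNeg, (ops i).add, (ops i).del⟩ : Op C))
        (I ∪ {c | ∃ i : Fin k, ops i ∈ O ∧ c = y i}) M N := by
  set Y := {c | ∃ i : Fin k, ops i ∈ O ∧ c = y i}
  have hYP : Disjoint Y P := Set.disjoint_left.2 fun _ ⟨i, _, hc⟩ => hc ▸ hyP i
  have hyY (i : Fin k) : y i ∈ Y ↔ ops i ∈ O :=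
    ⟨fun ⟨_, hj, hji⟩ => hyinj hji ▸ hj, fun h => ⟨i, h, rfl⟩⟩
  have hMY (T : Set C) : M ⊆ T ∪ Y ↔ M ⊆ T :=
    ⟨fun h => (hYP.symm.mono_left hM).subset_left_of_subset_union h,
      fun h => h.trans Set.subset_union_left⟩
  have hNY (T : Set C) : N ∩ (T ∪ Y) = ∅ ↔ N ∩ T = ∅ := by
    rw [Set.inter_union_distrib_left, (hYP.symm.mono_left hN).inter_eq, Set.union_empty]
  change _ ↔ HasPlan _ (Set.range fun i => (ops i).withPrePos (y i)) (I ∪ Y) M N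
  rw [hasPlan_iff_exists_indices hO, hasPlan_iff_exists_indices subset_rfl]
  simp only [Set.mem_range_self, implies_true, true_and,
    execSeq_map_withPrePos_iff hYP hopsP hyP _ hI, hyY]
  constructor
  · rintro ⟨is, hisO, T, hexec, hMT, hNT⟩
    exact ⟨is, T ∪ Y, ⟨T, hexec, hisO, rfl⟩, (hMY T).2 hMT, (hNY T).2 hNT⟩
  · rintro ⟨is, _, ⟨T, hexec, hisO, rfl⟩, hMT, hNT⟩
    exact ⟨is, hisO, T, hexec, (hMY T).1 hMT, (hNY T).1 hNT⟩
end
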